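/- Fix an integer K ≥ 1, α ∈ (0,∞)^K with θ := ∑_{i=1}^K α_i, and m ∈ ℕ^K. Then for every x ∈ ℝ^K: (1/2) ∑_{i,j=1}^K x_i (δ_{ij} − x_j) ∂²h^W(x,m)/∂x_i∂x_j + (1/2) ∑_{i=1}^K (α_i − θ x_i) ∂h^W(x,m)/∂x_i = ((θ+|m|−1)/2) ∑_{i : m_i ≥ 1} m_i h^W(x, m − e_i) − (|m|(θ+|m|−1)/2) h^W(x, m). This is the generator computation establishing that the Wright–Fisher generator acts on the duality functions h^W(·, m) as the generator of a pure-death process that jumps from m to m − e_i at rate m_i(θ+|m|−1)/2 (the core computation in the proof of Theorem 3.1). -/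

import Mathlib

/-! `h^W(·, m)` is a Gamma-function constant `c(m)` times the monomial `x^m`. Since `∂ᵢ x^m = mᵢ x^(m - eᵢ)`
and, by Euler's identity, `xᵢ ∂ᵢ x^m = mᵢ x^m`, the generator sends `x^m` to
`½ ∑ᵢ mᵢ (αᵢ + mᵢ - 1) x^(m - eᵢ) - ½ |m| (θ + |m| - 1) x^m`.
The recurrence `Γ(s + 1) = s Γ(s)` gives `(θ + |m| - 1) c(m - eᵢ) = (αᵢ + mᵢ - 1) c(m)`,
which turns the rates `mᵢ (αᵢ + mᵢ - 1)` into the death rates `mᵢ (θ + |m| - 1)`. -/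

open Finset

/-- The Wright--Fisher duality function `h^W(x, m)`. -/
noncomputable def hW {K : ℕ} (α : Fin K → ℝ) (x : Fin K → ℝ) (m : Fin K → ℕ) : ℝ :=
  (Real.Gamma ((∑ i, α i) + ∑ i, (m i : ℝ)) / Real.Gamma (∑ i, α i)) *
    (∏ j, Real.Gamma (α j) / Real.Gamma (α j + m j)) * ∏ j, x j ^ m j

/-- Partial derivative in the `i`-th coordinate. -/
noncomputable def pd {K : ℕ} (f : (Fin K → ℝ) → ℝ) (i : Fin K) (x : Fin K → ℝ) : ℝ :=
  deriv (fun w => f (Function.update x i w)) (x i)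

namespace WrightFisher

theorem sub_single_add_single {ι : Type*} [DecidableEq ι] {m : ι → ℕ} {i : ι} (h : 1 ≤ m i) :
    m - Pi.single i 1 + Pi.single i 1 = m := by
  funext j
  rcases eq_or_ne j i with rfl | hj
  · simpa using Nat.sub_add_cancel h
  · simp [hj]

/- The factor `m i` in this and the `natCast_mul_*` lemmas below makes them hold also when
`m i = 0`, where `m - Pi.single i 1` truncates to `m`. -/
theorem natCast_mul_sub_single_apply {ι : Type*} [DecidableEq ι] (m : ι → ℕ) (i : ι) :
    (m i : ℝ) * ((m - Pi.single i 1 : ι → ℕ) i : ℕ) = m i * (m i - 1) := by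
  rcases Nat.eq_zero_or_pos (m i) with h | h
  · simp [h]
  · simp [Nat.cast_sub h]

section

variable {ι : Type*} [Fintype ι] [DecidableEq ι]

noncomputable def monomial (m : ι → ℕ) (x : ι → ℝ) : ℝ := ∏ j, x j ^ m j

noncomputable def coeff (α : ι → ℝ) (m : ι → ℕ) : ℝ :=
  (Real.Gamma ((∑ i, α i) + ∑ i, (m i : ℝ)) / Real.Gamma (∑ i, α i)) *
    ∏ j, Real.Gamma (α j) / Real.Gamma (α j + m j)

theorem sum_add_single (n : ι → ℕ) (i : ι) :
    ∑ k, ((n + Pi.single i 1 : ι → ℕ) k : ℝ) = ∑ k, (n k : ℝ) + 1 := by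
  simp [Finset.sum_add_distrib, Pi.single_apply]

theorem sum_sub_single {m : ι → ℕ} {i : ι} (h : 1 ≤ m i) :
    ∑ k, ((m - Pi.single i 1 : ι → ℕ) k : ℝ) = ∑ k, (m k : ℝ) - 1 := by
  have hsum := sum_add_single (m - Pi.single i 1) i
  rw [sub_single_add_single h] at hsum
  rw [hsum, add_sub_cancel_right]

theorem natCast_mul_sum_sub_single (m : ι → ℕ) (i : ι) :
    (m i : ℝ) * ∑ k, ((m - Pi.single i 1 : ι → ℕ) k : ℝ) = m i * (∑ k, (m k : ℝ) - 1) := by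
  rcases Nat.eq_zero_or_pos (m i) with h | h
  · simp [h]
  · rw [sum_sub_single h]

theorem coeff_add_single {α : ι → ℝ} (hα : ∀ j, 0 < α j) (n : ι → ℕ) (i : ι) :
    (α i + n i) * coeff α (n + Pi.single i 1) = ((∑ k, α k) + ∑ k, (n k : ℝ)) * coeff α n := by
  have hθ : 0 < (∑ k, α k) + ∑ k, (n k : ℝ) :=
    add_pos_of_pos_of_nonneg (Finset.sum_pos (fun k _ => hα k) ⟨i, mem_univ i⟩) (by positivity)
  have hαi : 0 < α i + n i := add_pos_of_pos_of_nonneg (hα i) (Nat.cast_nonneg _)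
  have hrest : ∏ j ∈ {i}ᶜ, Real.Gamma (α j) / Real.Gamma (α j + (n + Pi.single i 1 : ι → ℕ) j)
      = ∏ j ∈ {i}ᶜ, Real.Gamma (α j) / Real.Gamma (α j + n j) :=
    Finset.prod_congr rfl fun j hj => by
      rw [Pi.add_apply, Pi.single_eq_of_ne (by simpa using hj), add_zero]
  unfold coeff
  rw [sum_add_single, Fintype.prod_eq_mul_prod_compl i, hrest, Fintype.prod_eq_mul_prod_compl i,
    Pi.add_apply, Pi.single_eq_same, Nat.cast_add, Nat.cast_one, ← add_assoc, ← add_assoc,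
    Real.Gamma_add_one hθ.ne', Real.Gamma_add_one hαi.ne']
  have hΓ := (Real.Gamma_pos_of_pos hαi).ne'
  field_simp

theorem monomial_add_single (n : ι → ℕ) (i : ι) (x : ι → ℝ) :
    monomial (n + Pi.single i 1) x = x i * monomial n x := by
  simp only [monomial, Pi.add_apply, pow_add, Finset.prod_mul_distrib, Pi.single_apply, pow_ite,
    pow_one, pow_zero, Finset.prod_ite_eq', mem_univ, if_true, mul_comm]

theorem monomial_update (m : ι → ℕ) (x : ι → ℝ) (i : ι) (w : ℝ) :
    monomial m (Function.update x i w) = w ^ m i * ∏ j ∈ {i}ᶜ, x j ^ m j := by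
  rw [monomial, Fintype.prod_eq_mul_prod_compl i, Function.update_self]
  congr 1
  exact Finset.prod_congr rfl fun j hj => by
    rw [Function.update_of_ne (by simpa using hj)]

end

variable {K : ℕ}

noncomputable def generator (α : Fin K → ℝ) (f : (Fin K → ℝ) → ℝ) (x : Fin K → ℝ) : ℝ :=
  (1 / 2) * ∑ i, ∑ j, x i * ((if i = j then (1 : ℝ) else 0) - x j) * pd (pd f j) i x
    + (1 / 2) * ∑ i, (α i - (∑ k, α k) * x i) * pd f i x

theorem hW_eq_coeff_mul_monomial (α : Fin K → ℝ) (x : Fin K → ℝ) (m : Fin K → ℕ) :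
    hW α x m = coeff α m * monomial m x :=
  rfl

theorem pd_const_mul (c : ℝ) (f : (Fin K → ℝ) → ℝ) (i : Fin K) :
    pd (fun y => c * f y) i = fun x => c * pd f i x :=
  funext fun _ => deriv_const_mul_field c

theorem pd_monomial (m : Fin K → ℕ) (i : Fin K) (x : Fin K → ℝ) :
    pd (monomial m) i x = m i * monomial (m - Pi.single i 1) x := by
  have hsub : monomial (m - Pi.single i 1) x = x i ^ (m i - 1) * ∏ j ∈ {i}ᶜ, x j ^ m j := by
    rw [← Function.update_eq_self i x, monomial_update, Function.update_eq_self]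
    congr 1
    · simp
    · exact Finset.prod_congr rfl fun j hj => by
        rw [Pi.sub_apply, Pi.single_eq_of_ne (by simpa using hj), Nat.sub_zero]
  simp only [pd, monomial_update, deriv_mul_const_field, deriv_pow_field, hsub]
  ring

theorem mul_pd_monomial (m : Fin K → ℕ) (i : Fin K) (x : Fin K → ℝ) :
    x i * pd (monomial m) i x = m i * monomial m x := by
  rcases Nat.eq_zero_or_pos (m i) with h | h
  · simp [pd_monomial, h]
  · rw [pd_monomial, mul_left_comm, ← monomial_add_single, sub_single_add_single h]

theorem sum_mul_pd_monomial (m : Fin K → ℕ) (x : Fin K → ℝ) :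
    ∑ i, x i * pd (monomial m) i x = (∑ i, (m i : ℝ)) * monomial m x := by
  simp only [mul_pd_monomial, Finset.sum_mul]

theorem pd_pd_monomial (m : Fin K → ℕ) (i j : Fin K) (x : Fin K → ℝ) :
    pd (pd (monomial m) j) i x = m j * pd (monomial (m - Pi.single j 1)) i x := by
  rw [funext (pd_monomial m j), pd_const_mul]

theorem generator_const_mul (α : Fin K → ℝ) (c : ℝ) (f : (Fin K → ℝ) → ℝ) (x : Fin K → ℝ) :
    generator α (fun y => c * f y) x = c * generator α f x := by
  simp only [generator, pd_const_mul, Finset.mul_sum, mul_add]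
  congr 1
  · exact Finset.sum_congr rfl fun _ _ => Finset.sum_congr rfl fun _ _ => by ring
  · exact Finset.sum_congr rfl fun _ _ => by ring

theorem generator_monomial (α : Fin K → ℝ) (m : Fin K → ℕ) (x : Fin K → ℝ) :
    generator α (monomial m) x
      = (1 / 2) * ∑ i, (m i : ℝ) * (α i + m i - 1) * monomial (m - Pi.single i 1) x
        - (1 / 2) * (∑ k, (m k : ℝ)) * ((∑ k, α k) + (∑ k, (m k : ℝ)) - 1) * monomial m x := by
  have hdiag (i : Fin K) : x i * pd (pd (monomial m) i) i x
      = m i * (m i - 1) * monomial (m - Pi.single i 1) x := by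
    rw [pd_pd_monomial, mul_left_comm, mul_pd_monomial, ← mul_assoc, natCast_mul_sub_single_apply]
  have hcross (j : Fin K) : ∑ i, x i * x j * pd (pd (monomial m) j) i x
      = m j * ((∑ k, (m k : ℝ)) - 1) * monomial m x := by
    calc ∑ i, x i * x j * pd (pd (monomial m) j) i x
        = x j * m j * ∑ i, x i * pd (monomial (m - Pi.single j 1)) i x := by
          simp only [pd_pd_monomial, Finset.mul_sum]
          exact Finset.sum_congr rfl fun _ _ => by ring
      _ = (∑ k, ((m - Pi.single j 1 : Fin K → ℕ) k : ℝ)) * (x j * pd (monomial m) j x) := by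
          rw [sum_mul_pd_monomial, pd_monomial]
          ring
      _ = m j * ((∑ k, (m k : ℝ)) - 1) * monomial m x := by
          rw [mul_pd_monomial, mul_left_comm, ← mul_assoc, natCast_mul_sum_sub_single]
  have hsplit (i : Fin K) : ∑ j, x i * ((if i = j then (1 : ℝ) else 0) - x j) *
      pd (pd (monomial m) j) i x
      = x i * pd (pd (monomial m) i) i x - ∑ j, x i * x j * pd (pd (monomial m) j) i x := by
    simp only [mul_sub, sub_mul, Finset.sum_sub_distrib, mul_ite, mul_one, mul_zero, ite_mul,
      zero_mul, Finset.sum_ite_eq, mem_univ, if_true]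
  have hdrift : ∑ i, (α i - (∑ k, α k) * x i) * pd (monomial m) i x
      = ∑ i, α i * (m i * monomial (m - Pi.single i 1) x)
        - (∑ k, α k) * ((∑ k, (m k : ℝ)) * monomial m x) := by
    simp only [sub_mul, Finset.sum_sub_distrib, mul_assoc, ← Finset.mul_sum, sum_mul_pd_monomial]
    simp only [pd_monomial]
  have hrate : ∑ i, (m i : ℝ) * (α i + m i - 1) * monomial (m - Pi.single i 1) x
      = ∑ i, (m i : ℝ) * (m i - 1) * monomial (m - Pi.single i 1) x
        + ∑ i, α i * (m i * monomial (m - Pi.single i 1) x) := by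
    rw [← Finset.sum_add_distrib]
    exact Finset.sum_congr rfl fun _ _ => by ring
  simp only [generator, hsplit, Finset.sum_sub_distrib, hdiag, hdrift, hrate]
  rw [Finset.sum_comm]
  simp only [hcross, ← Finset.sum_mul]
  ring

theorem natCast_mul_coeff_sub_single {α : Fin K → ℝ} (hα : ∀ j, 0 < α j) (m : Fin K → ℕ)
    (i : Fin K) :
    (m i : ℝ) * (((∑ k, α k) + (∑ k, (m k : ℝ)) - 1) * coeff α (m - Pi.single i 1))
      = m i * ((α i + m i - 1) * coeff α m) := by
  rcases Nat.eq_zero_or_pos (m i) with h | h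
  · simp [h]
  · have hrec := coeff_add_single hα (m - Pi.single i 1) i
    rw [sub_single_add_single h, sum_sub_single h, Pi.sub_apply, Pi.single_eq_same,
      Nat.cast_sub h, Nat.cast_one] at hrec
    linear_combination (-(m i : ℝ)) * hrec

end WrightFisher

open WrightFisher

theorem stmt1 (K : ℕ) (α : Fin K → ℝ) (hα : ∀ i, 0 < α i)
    (m : Fin K → ℕ) (x : Fin K → ℝ) :
    (1 / 2) * ∑ i, ∑ j, x i * ((if i = j then (1 : ℝ) else 0) - x j) *
          pd (pd (fun y => hW α y m) j) i x
      + (1 / 2) * ∑ i, (α i - (∑ k, α k) * x i) * pd (fun y => hW α y m) i x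
    = ((∑ k, α k) + (∑ k, (m k : ℝ)) - 1) / 2 *
        ∑ i, (m i : ℝ) * hW α x (m - Pi.single i 1)
      - (∑ k, (m k : ℝ)) * ((∑ k, α k) + (∑ k, (m k : ℝ)) - 1) / 2 * hW α x m := by
  change generator α (fun y => coeff α m * monomial m y) x = _
  have hrates : ((∑ k, α k) + (∑ k, (m k : ℝ)) - 1) * ∑ i, (m i : ℝ) * hW α x (m - Pi.single i 1)
      = coeff α m * ∑ i, (m i : ℝ) * (α i + m i - 1) * monomial (m - Pi.single i 1) x := by
    simp only [hW_eq_coeff_mul_monomial, Finset.mul_sum]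
    exact Finset.sum_congr rfl fun i _ => by
      linear_combination monomial (m - Pi.single i 1) x * natCast_mul_coeff_sub_single hα m i
  rw [generator_const_mul, generator_monomial, hW_eq_coeff_mul_monomial]
  linear_combination (-1 / 2 : ℝ) * hrates
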